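/- If τ : M → N is a surjective weak map between matroids of the same rank r, then the Whitney numbers of the first kind satisfy w_k(M) ≥ w_k(N) for each k ∈ {0, 1, …, r}. -/

import Mathlib

open Finset

/-- A finite matroid on ground set `E`, presented by its rank function. -/
structure FinMatroid (E : Type) [DecidableEq E] [Fintype E] where
  rk : Finset E → ℕ
  rk_le_card : ∀ X, rk X ≤ X.card
  rk_mono : ∀ ⦃X Y : Finset E⦄, X ⊆ Y → rk X ≤ rk Y
  rk_submod : ∀ X Y, rk (X ∪ Y) + rk (X ∩ Y) ≤ rk X + rk Y

namespace FinMatroid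

variable {E α β γ : Type} [DecidableEq E] [Fintype E]

/-- A set is independent iff its rank equals its cardinality. -/
def Indep (M : FinMatroid E) (X : Finset E) : Prop := M.rk X = X.card

/-- The closure of a set: all elements whose insertion does not raise the rank. -/
def closure (M : FinMatroid E) (X : Finset E) : Finset E :=
  univ.filter fun e => M.rk (insert e X) = M.rk X

/-- A flat is a closed set. -/
def IsFlat (M : FinMatroid E) (X : Finset E) : Prop := M.closure X = X

instance (M : FinMatroid E) (X : Finset E) : Decidable (M.IsFlat X) :=
  decidable_of_iff (M.closure X = X) Iff.rfl

/-- The rank of the matroid. -/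
def rank (M : FinMatroid E) : ℕ := M.rk univ

/-- The image of a finite set under a map into `E(N) ∪ {o}`; the zero element `o`
is modelled by `none` and contributes nothing to the image. -/
def optImage [DecidableEq β] (τ : α → Option β) (X : Finset α) : Finset β :=
  X.biUnion fun a => (τ a).toFinset

variable [DecidableEq α] [Fintype α] [DecidableEq β] [Fintype β]

/-- `τ : E(M) ∪ o → E(N) ∪ o` (with `o ↦ o`) is a weak map iff the rank of the image of any
set is at most the rank of the set. -/
def IsWeakMap (M : FinMatroid α) (N : FinMatroid β) (τ : α → Option β) : Prop :=
  ∀ X : Finset α, N.rk (optImage τ X) ≤ M.rk X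

/-- `τ` is surjective if every (nonzero) element of `E(N)` is in the image. -/
def IsSurjMap (τ : α → Option β) : Prop := ∀ b : β, ∃ a : α, τ a = some b

/-- Preimage of `Y ∪ {o}` under `τ`, intersected with `E(M)`. -/
def optPreimage (τ : α → Option β) (Y : Finset β) : Finset α :=
  univ.filter fun a => ∀ b, τ a = some b → b ∈ Y

/-- A strong map: preimages of flats are flats. -/
def IsStrongMap (M : FinMatroid α) (N : FinMatroid β) (τ : α → Option β) : Prop :=
  ∀ Y : Finset β, N.IsFlat Y → M.IsFlat (optPreimage τ Y)

/-- The induced map `τ^#` on flats, `X ↦ cl_N(τ(X))`. -/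
def hmap (N : FinMatroid β) (τ : α → Option β) (X : Finset α) : Finset β :=
  N.closure (optImage τ X)

/-- The Möbius function `μ(0̂, X)` of the lattice of flats of `M`, where `0̂ = cl(∅)`. -/
def mu (M : FinMatroid E) (X : Finset E) : ℤ :=
  if X = M.closure ∅ then 1
  else - ∑ Y ∈ (X.powerset.filter fun Y => M.IsFlat Y ∧ Y ≠ X).attach, M.mu Y.1
termination_by X.card
decreasing_by
  have h := Y.2
  simp only [Finset.mem_filter, Finset.mem_powerset] at h
  exact Finset.card_lt_card (h.1.ssubset_of_ne h.2.2)

/-- The `k`-th Whitney number of the first kind. -/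
def whitney (M : FinMatroid E) (k : ℕ) : ℕ :=
  ∑ X ∈ univ.powerset.filter (fun X => M.IsFlat X ∧ M.rk X = k), (M.mu X).natAbs

end FinMatroid

namespace FinMatroid

set_option linter.unusedSectionVars false

variable {E : Type} [DecidableEq E] [Fintype E]

-- basic lemmas
variable (M : FinMatroid E)

lemma rk_empty : M.rk ∅ = 0 := Nat.le_zero.mp (by simpa using M.rk_le_card ∅)

lemma mem_closure {e : E} {X : Finset E} :
    e ∈ M.closure X ↔ M.rk (insert e X) = M.rk X := by
  simp [closure]

lemma subset_closure (X : Finset E) : X ⊆ M.closure X := by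
  intro e he
  rw [mem_closure, Finset.insert_eq_self.2 he]

lemma rk_insert_le (e : E) (X : Finset E) : M.rk (insert e X) ≤ M.rk X + 1 := by
  have h := M.rk_submod X {e}
  have h1 : M.rk {e} ≤ 1 := by simpa using M.rk_le_card {e}
  have h2 : X ∪ {e} = insert e X := by rw [Finset.union_comm]; exact (Finset.insert_eq e X).symm
  rw [h2] at h
  omega

lemma rk_union_eq (X Y : Finset E) (hY : ∀ e ∈ Y, M.rk (insert e X) = M.rk X) :
    M.rk (X ∪ Y) = M.rk X := by
  induction Y using Finset.induction with
  | empty => simp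
  | @insert f Y hf ih =>
    have hXY : M.rk (X ∪ Y) = M.rk X := ih fun e he => hY e (Finset.mem_insert_of_mem he)
    have hsub := M.rk_submod (X ∪ Y) (insert f X)
    have h1 : (X ∪ Y) ∪ insert f X = X ∪ insert f Y := by
      ext x; simp [Finset.mem_union, Finset.mem_insert]; tauto
    have h2 : X ⊆ (X ∪ Y) ∩ insert f X := by
      intro x hx; simp [Finset.mem_inter, Finset.mem_union, hx]
    have h3 : M.rk X ≤ M.rk ((X ∪ Y) ∩ insert f X) := M.rk_mono h2
    have h4 : M.rk (insert f X) = M.rk X := hY f (Finset.mem_insert_self f Y)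
    have h5 : M.rk X ≤ M.rk (X ∪ insert f Y) := M.rk_mono Finset.subset_union_left
    rw [h1, hXY, h4] at hsub
    omega

lemma rk_closure (X : Finset E) : M.rk (M.closure X) = M.rk X := by
  have h : M.closure X = X ∪ M.closure X := by
    rw [Finset.union_eq_right.2 (M.subset_closure X)]
  rw [h]
  exact M.rk_union_eq X (M.closure X) fun e he => (M.mem_closure.1 he)

lemma closure_mono {X Y : Finset E} (hXY : X ⊆ Y) : M.closure X ⊆ M.closure Y := by
  intro e he
  rw [mem_closure] at he ⊢
  have hsub := M.rk_submod (insert e X) Y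
  have h1 : insert e X ∪ Y = insert e Y := by
    ext x
    simp only [Finset.mem_union, Finset.mem_insert]
    constructor
    · rintro (⟨h | h⟩ | h)
      · exact Or.inl h
      · exact Or.inr (hXY h)
      · exact Or.inr h
    · rintro (h | h)
      · exact Or.inl (Or.inl h)
      · exact Or.inr h
  have h2 : X ⊆ insert e X ∩ Y := by
    intro x hx; simp [Finset.mem_inter, Finset.mem_insert, hx, hXY hx]
  have h3 : M.rk X ≤ M.rk (insert e X ∩ Y) := M.rk_mono h2
  have h5 : M.rk Y ≤ M.rk (insert e Y) := M.rk_mono (Finset.subset_insert e Y)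
  rw [h1, he] at hsub
  omega

lemma isFlat_closure (X : Finset E) : M.IsFlat (M.closure X) := by
  unfold IsFlat
  apply Finset.Subset.antisymm
  · intro e he
    rw [mem_closure] at he ⊢
    have h1 : M.rk (insert e X) ≤ M.rk (insert e (M.closure X)) :=
      M.rk_mono (Finset.insert_subset_insert e (M.subset_closure X))
    have h2 : M.rk X ≤ M.rk (insert e X) := M.rk_mono (Finset.subset_insert e X)
    rw [he, M.rk_closure] at h1
    omega
  · exact M.subset_closure _

lemma closure_insert_of_mem {e : E} {X : Finset E} (he : e ∈ M.closure X) :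
    M.closure (insert e X) = M.closure X := by
  apply Finset.Subset.antisymm
  · intro f hf
    rw [mem_closure] at hf he ⊢
    have h1 : M.rk (insert f X) ≤ M.rk (insert f (insert e X)) :=
      M.rk_mono (Finset.insert_subset_insert f (Finset.subset_insert e X))
    have h2 : M.rk X ≤ M.rk (insert f X) := M.rk_mono (Finset.subset_insert f X)
    rw [hf, he] at h1
    omega
  · exact M.closure_mono (Finset.subset_insert e X)

lemma indep_subset {A B : Finset E} (hB : M.rk B = B.card) (hAB : A ⊆ B) :
    M.rk A = A.card := by
  have hsub := M.rk_submod A (B \ A)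
  have h1 : A ∪ (B \ A) = B := Finset.union_sdiff_of_subset hAB
  have h2 : M.rk (B \ A) ≤ (B \ A).card := M.rk_le_card _
  have h3 : (B \ A).card = B.card - A.card := Finset.card_sdiff_of_subset hAB
  have h4 : A.card ≤ B.card := Finset.card_le_card hAB
  have h5 : M.rk A ≤ A.card := M.rk_le_card A
  rw [h1] at hsub
  omega

lemma loops_subset_flat {X : Finset E} (hX : M.IsFlat X) : M.closure ∅ ⊆ X := by
  have := M.closure_mono (Finset.empty_subset X)
  rwa [hX] at this

def IsNBC (M : FinMatroid E) (ord : E → ℕ) (A : Finset E) : Prop :=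
  Disjoint A (M.closure ∅) ∧
  ∀ e, e ∉ M.closure ∅ → e ∉ M.closure (A.filter fun x => ord e < ord x)

instance (M : FinMatroid E) (ord : E → ℕ) : DecidablePred (M.IsNBC ord) := fun A => by
  unfold IsNBC; infer_instance

lemma nbc_indep (M : FinMatroid E) (ord : E → ℕ) (hord : Function.Injective ord) :
    ∀ A : Finset E, M.IsNBC ord A → M.rk A = A.card := by
  intro A
  induction A using Finset.strongInduction with
  | _ A ih =>
  intro hA
  rcases A.eq_empty_or_nonempty with rfl | hne
  · simpa using M.rk_empty
  obtain ⟨m, hmA, hmin⟩ := A.exists_min_image ord hne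
  have hfilter : A.filter (fun x => ord m < ord x) = A.erase m := by
    ext x
    simp only [Finset.mem_filter, Finset.mem_erase]
    constructor
    · rintro ⟨hx, hlt⟩
      exact ⟨fun h => by subst h; exact lt_irrefl _ hlt, hx⟩
    · rintro ⟨hne', hx⟩
      exact ⟨hx, lt_of_le_of_ne (hmin x hx) fun h => hne' (hord h).symm⟩
  have hm_not_loop : m ∉ M.closure ∅ := Finset.disjoint_left.1 hA.1 hmA
  have hm := hA.2 m hm_not_loop
  rw [hfilter, M.mem_closure, Finset.insert_erase hmA] at hm
  have hAe : M.IsNBC ord (A.erase m) := by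
    refine ⟨Finset.disjoint_of_subset_left (Finset.erase_subset m A) hA.1, fun e he hc => ?_⟩
    exact hA.2 e he
      (M.closure_mono (Finset.filter_subset_filter _ (Finset.erase_subset m A)) hc)
  have hcard := ih (A.erase m) (Finset.erase_ssubset hmA) hAe
  have h1 : M.rk A ≤ M.rk (A.erase m) + 1 := by
    have := M.rk_insert_le m (A.erase m)
    rwa [Finset.insert_erase hmA] at this
  have h2 : M.rk (A.erase m) ≤ M.rk A := M.rk_mono (Finset.erase_subset m A)
  have h3 : (A.erase m).card = A.card - 1 := Finset.card_erase_of_mem hmA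
  have h4 : 1 ≤ A.card := Finset.card_pos.2 hne
  have h5 : M.rk A ≤ A.card := M.rk_le_card A
  omega



lemma mu_eq_sum (M : FinMatroid E) :
    ∀ X : Finset E, M.IsFlat X →
      mu M X = ∑ A ∈ X.powerset.filter
        (fun A => Disjoint A (M.closure ∅) ∧ M.closure A = X), (-1 : ℤ) ^ A.card := by
  intro X
  induction X using Finset.strongInduction with
  | _ X ih =>
  intro hX
  rw [mu]
  by_cases h0 : X = M.closure ∅
  · rw [if_pos h0]
    have hfe : X.powerset.filter
        (fun A => Disjoint A (M.closure ∅) ∧ M.closure A = X) = {∅} := by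
      ext A
      simp only [Finset.mem_filter, Finset.mem_powerset, Finset.mem_singleton]
      constructor
      · rintro ⟨hAX, hdisj, -⟩
        rw [Finset.eq_empty_iff_forall_notMem]
        intro a ha
        exact Finset.disjoint_left.1 hdisj ha (h0 ▸ hAX ha)
      · rintro rfl
        exact ⟨Finset.empty_subset X, Finset.disjoint_empty_left _, h0.symm⟩
    rw [hfe]
    simp
  · rw [if_neg h0]
    set L := M.closure ∅ with hL
    have hmap : ∀ A ∈ X.powerset.filter (fun A => Disjoint A L),
        M.closure A ∈ X.powerset.filter M.IsFlat := by
      intro A hA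
      simp only [Finset.mem_filter, Finset.mem_powerset] at hA ⊢
      refine ⟨?_, M.isFlat_closure A⟩
      have := M.closure_mono hA.1
      rwa [hX] at this
    have hfib := Finset.sum_fiberwise_of_maps_to hmap (fun A => (-1 : ℤ) ^ A.card)
    have hinner : ∀ Y ∈ X.powerset.filter M.IsFlat,
        ((X.powerset.filter (fun A => Disjoint A L)).filter
          (fun A => M.closure A = Y)) = Y.powerset.filter
            (fun A => Disjoint A L ∧ M.closure A = Y) := by
      intro Y hY
      simp only [Finset.mem_filter, Finset.mem_powerset] at hY
      ext A
      simp only [Finset.mem_filter, Finset.mem_powerset]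
      constructor
      · rintro ⟨⟨hAX, hd⟩, hcl⟩
        exact ⟨hcl ▸ M.subset_closure A, hd, hcl⟩
      · rintro ⟨hAY, hd, hcl⟩
        exact ⟨⟨hAY.trans hY.1, hd⟩, hcl⟩
    have hkey : ∑ Y ∈ X.powerset.filter M.IsFlat,
        (∑ A ∈ Y.powerset.filter (fun A => Disjoint A L ∧ M.closure A = Y),
          (-1 : ℤ) ^ A.card) = 0 := by
      have h1 : ∑ Y ∈ X.powerset.filter M.IsFlat,
          (∑ A ∈ Y.powerset.filter (fun A => Disjoint A L ∧ M.closure A = Y),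
            (-1 : ℤ) ^ A.card)
          = ∑ Y ∈ X.powerset.filter M.IsFlat,
            ∑ A ∈ (X.powerset.filter (fun A => Disjoint A L)).filter
              (fun A => M.closure A = Y), (-1 : ℤ) ^ A.card :=
        Finset.sum_congr rfl fun Y hY => by rw [hinner Y hY]
      rw [h1, hfib]
      have hPL : X.powerset.filter (fun A => Disjoint A L) = (X \ L).powerset := by
        ext A
        simp only [Finset.mem_filter, Finset.mem_powerset, Finset.subset_sdiff]
      rw [hPL, Finset.sum_powerset_neg_one_pow_card, if_neg]
      intro hXL
      rw [Finset.sdiff_eq_empty_iff_subset] at hXL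
      exact h0 (Finset.Subset.antisymm hXL (M.loops_subset_flat hX))
    have hsplit := Finset.sum_filter_add_sum_filter_not
      (X.powerset.filter M.IsFlat) (fun Y => Y = X)
      (fun Y => ∑ A ∈ Y.powerset.filter (fun A => Disjoint A L ∧ M.closure A = Y),
        (-1 : ℤ) ^ A.card)
    have hXonly : (X.powerset.filter M.IsFlat).filter (fun Y => Y = X) = {X} := by
      ext Y
      simp only [Finset.mem_filter, Finset.mem_powerset, Finset.mem_singleton]
      constructor
      · tauto
      · rintro rfl; exact ⟨⟨Finset.Subset.refl _, hX⟩, rfl⟩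
    have hrest : (X.powerset.filter M.IsFlat).filter (fun Y => ¬Y = X)
        = X.powerset.filter (fun Y => M.IsFlat Y ∧ Y ≠ X) := by
      rw [Finset.filter_filter]
    rw [hXonly, hrest, hkey, Finset.sum_singleton] at hsplit
    have hattach : ∑ Y ∈ (X.powerset.filter fun Y => M.IsFlat Y ∧ Y ≠ X).attach,
        mu M Y.1 = ∑ Y ∈ X.powerset.filter (fun Y => M.IsFlat Y ∧ Y ≠ X),
          ∑ A ∈ Y.powerset.filter (fun A => Disjoint A L ∧ M.closure A = Y),
            (-1 : ℤ) ^ A.card := by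
      rw [← Finset.sum_attach (X.powerset.filter fun Y => M.IsFlat Y ∧ Y ≠ X)
        (fun Y => ∑ A ∈ Y.powerset.filter (fun A => Disjoint A L ∧ M.closure A = Y),
          (-1 : ℤ) ^ A.card)]
      refine Finset.sum_congr rfl fun Y _ => ?_
      have hY := Y.2
      simp only [Finset.mem_filter, Finset.mem_powerset] at hY
      exact ih Y.1 (hY.1.ssubset_of_ne hY.2.2) hY.2.1
    rw [hattach]
    linarith
def toggle (A : Finset E) (e₀ : E) : Finset E :=
  if e₀ ∈ A then A.erase e₀ else insert e₀ A

lemma mem_toggle {A : Finset E} {e₀ x : E} :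
    x ∈ toggle A e₀ ↔ (x ∈ A ∧ x ≠ e₀) ∨ (x = e₀ ∧ e₀ ∉ A) := by
  unfold toggle
  split <;> rename_i h <;> simp only [Finset.mem_erase, Finset.mem_insert] <;> constructor
  · rintro ⟨h1, h2⟩; exact Or.inl ⟨h2, h1⟩
  · rintro (⟨h1, h2⟩ | ⟨rfl, h2⟩); exacts [⟨h2, h1⟩, absurd h h2]
  · rintro (rfl | h1)
    · exact Or.inr ⟨rfl, h⟩
    · exact Or.inl ⟨h1, fun hne => h (hne ▸ h1)⟩
  · rintro (⟨h1, h2⟩ | ⟨rfl, h2⟩); exacts [Or.inr h1, Or.inl rfl]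

lemma toggle_toggle (A : Finset E) (e₀ : E) : toggle (toggle A e₀) e₀ = A := by
  unfold toggle
  by_cases h : e₀ ∈ A
  · rw [if_pos h, if_neg (Finset.notMem_erase e₀ A), Finset.insert_erase h]
  · rw [if_neg h, if_pos (Finset.mem_insert_self e₀ A), Finset.erase_insert h]

lemma toggle_ne (A : Finset E) (e₀ : E) : toggle A e₀ ≠ A := by
  unfold toggle
  by_cases h : e₀ ∈ A
  · rw [if_pos h]
    intro hc
    exact (Finset.notMem_erase e₀ A) (hc.symm ▸ h)
  · rw [if_neg h]
    intro hc
    exact h (hc ▸ Finset.mem_insert_self e₀ A)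

lemma pow_card_toggle (A : Finset E) (e₀ : E) :
    (-1 : ℤ) ^ A.card + (-1 : ℤ) ^ (toggle A e₀).card = 0 := by
  unfold toggle
  by_cases h : e₀ ∈ A
  · rw [if_pos h]
    have := Finset.card_erase_add_one h
    rw [← this, pow_succ]
    ring
  · rw [if_neg h, Finset.card_insert_of_notMem h, pow_succ]
    ring

lemma toggle_subset {A : Finset E} {X : Finset E} (hA : A ⊆ X) {e₀ : E} (he : e₀ ∈ X) :
    toggle A e₀ ⊆ X := by
  intro x hx
  rcases mem_toggle.1 hx with ⟨h1, -⟩ | ⟨rfl, -⟩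
  · exact hA h1
  · exact he

/-- closure is unchanged by toggling an element that lies in the closure of the
part of `A` above it. -/
lemma closure_toggle (M : FinMatroid E) (ord : E → ℕ) {A : Finset E} {e₀ : E}
    (h0 : e₀ ∈ M.closure (A.filter fun x => ord e₀ < ord x)) :
    M.closure (toggle A e₀) = M.closure A := by
  unfold toggle
  by_cases h : e₀ ∈ A
  · rw [if_pos h]
    have hsub : (A.filter fun x => ord e₀ < ord x) ⊆ A.erase e₀ := by
      intro x hx
      rw [Finset.mem_filter] at hx
      exact Finset.mem_erase.2 ⟨fun hc => absurd (hc ▸ hx.2) (lt_irrefl _), hx.1⟩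
    have h0' : e₀ ∈ M.closure (A.erase e₀) := M.closure_mono hsub h0
    conv_rhs => rw [← Finset.insert_erase h]
    rw [M.closure_insert_of_mem h0']
  · rw [if_neg h]
    have h0' : e₀ ∈ M.closure A := M.closure_mono (Finset.filter_subset _ A) h0
    rw [M.closure_insert_of_mem h0']

/-- for `e` at or below the toggled element, the filtered sets have the same closure. -/
lemma closure_toggle_filter (M : FinMatroid E) (ord : E → ℕ) {A : Finset E} {e₀ : E}
    (h0 : e₀ ∈ M.closure (A.filter fun x => ord e₀ < ord x)) {e : E}
    (he : ¬ ord e₀ < ord e) :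
    M.closure ((toggle A e₀).filter fun x => ord e < ord x)
      = M.closure (A.filter fun x => ord e < ord x) := by
  by_cases hlt : ord e < ord e₀
  · -- e strictly below e₀
    have hsub : (A.filter fun x => ord e₀ < ord x)
        ⊆ (A.filter fun x => ord e < ord x).filter fun x => ord e₀ < ord x := by
      intro x hx
      rw [Finset.mem_filter] at hx
      exact Finset.mem_filter.2 ⟨Finset.mem_filter.2 ⟨hx.1, hlt.trans hx.2⟩, hx.2⟩
    have h0' : e₀ ∈ M.closure ((A.filter fun x => ord e < ord x).filter
        fun x => ord e₀ < ord x) := M.closure_mono hsub h0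
    have hfe : (toggle A e₀).filter (fun x => ord e < ord x)
        = toggle (A.filter fun x => ord e < ord x) e₀ := by
      unfold toggle
      by_cases h : e₀ ∈ A
      · rw [if_pos h, if_pos (Finset.mem_filter.2 ⟨h, hlt⟩), Finset.filter_erase]
      · rw [if_neg h, if_neg (fun hc => h (Finset.mem_filter.1 hc).1),
          Finset.filter_insert, if_pos hlt]
    rw [hfe]
    exact closure_toggle M ord h0'
  · -- ord e ≥ ord e₀ : the filtered sets are equal
    have heq : (toggle A e₀).filter (fun x => ord e < ord x)
        = A.filter fun x => ord e < ord x := by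
      ext x
      simp only [Finset.mem_filter, mem_toggle]
      constructor
      · rintro ⟨(⟨h1, h2⟩ | ⟨rfl, h2⟩), h3⟩
        · exact ⟨h1, h3⟩
        · exact absurd h3 hlt
      · rintro ⟨h1, h3⟩
        by_cases hx : x = e₀
        · exact absurd (hx ▸ h3) hlt
        · exact ⟨Or.inl ⟨h1, hx⟩, h3⟩
    rw [heq]

/-- The set of "violating" elements for `A`. -/
def vset (M : FinMatroid E) (ord : E → ℕ) (A : Finset E) : Set E :=
  {e : E | e ∉ M.closure ∅ ∧ e ∈ M.closure (A.filter fun x => ord e < ord x)}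

noncomputable def emin (M : FinMatroid E) (ord : E → ℕ) (A : Finset E)
    (h : (vset M ord A).Nonempty) : E :=
  Function.argminOn ord _ h

lemma emin_spec (M : FinMatroid E) (ord : E → ℕ) (A : Finset E)
    (h : (vset M ord A).Nonempty) : emin M ord A h ∈ vset M ord A :=
  Function.argminOn_mem ord _ h

lemma emin_min (M : FinMatroid E) (ord : E → ℕ) (A : Finset E)
    (h : (vset M ord A).Nonempty) {e : E} (he : e ∈ vset M ord A) :
    ¬ ord e < ord (emin M ord A h) :=
  Function.not_lt_argminOn ord _ he

lemma vset_toggle_emin (M : FinMatroid E) (ord : E → ℕ) (hord : Function.Injective ord)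
    (A : Finset E) (h : (vset M ord A).Nonempty) :
    emin M ord A h ∈ vset M ord (toggle A (emin M ord A h)) ∧
    ∀ e ∈ vset M ord (toggle A (emin M ord A h)), ¬ ord e < ord (emin M ord A h) := by
  set m := emin M ord A h with hm
  obtain ⟨hmL, hmcl⟩ := emin_spec M ord A h
  constructor
  · refine ⟨hmL, ?_⟩
    rw [closure_toggle_filter M ord hmcl (lt_irrefl _)]
    exact hmcl
  · rintro e ⟨heL, hecl⟩ hlt
    rw [closure_toggle_filter M ord hmcl (fun hc => absurd (hc.trans hlt) (lt_irrefl _))]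
      at hecl
    exact emin_min M ord A h ⟨heL, hecl⟩ hlt

lemma emin_toggle (M : FinMatroid E) (ord : E → ℕ) (hord : Function.Injective ord)
    (A : Finset E) (h : (vset M ord A).Nonempty)
    (h2 : (vset M ord (toggle A (emin M ord A h))).Nonempty) :
    emin M ord (toggle A (emin M ord A h)) h2 = emin M ord A h := by
  obtain ⟨hmem, hmin⟩ := vset_toggle_emin M ord hord A h
  have h1 : ¬ ord (emin M ord A h) < ord (emin M ord (toggle A (emin M ord A h)) h2) :=
    emin_min M ord _ h2 hmem
  have h2' : ¬ ord (emin M ord (toggle A (emin M ord A h)) h2) < ord (emin M ord A h) :=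
    hmin _ (emin_spec M ord _ h2)
  exact hord (le_antisymm (not_lt.1 h1) (not_lt.1 h2'))

lemma mu_eq_nbc (M : FinMatroid E) (ord : E → ℕ) (hord : Function.Injective ord)
    {X : Finset E} (hX : M.IsFlat X) :
    mu M X = (-1 : ℤ) ^ (M.rk X) *
      ((X.powerset.filter fun A => M.IsNBC ord A ∧ M.closure A = X).card : ℤ) := by
  rw [mu_eq_sum M X hX]
  have hsplit := Finset.sum_filter_add_sum_filter_not
    (X.powerset.filter fun A => Disjoint A (M.closure ∅) ∧ M.closure A = X)
    (fun A => M.IsNBC ord A) (fun A => (-1 : ℤ) ^ A.card)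
  -- identify the NBC part
  have hnbc_set : (X.powerset.filter fun A => Disjoint A (M.closure ∅) ∧
      M.closure A = X).filter (fun A => M.IsNBC ord A)
      = X.powerset.filter fun A => M.IsNBC ord A ∧ M.closure A = X := by
    ext A
    simp only [Finset.mem_filter, Finset.mem_powerset]
    constructor
    · rintro ⟨⟨hAX, hd, hcl⟩, hnbc⟩
      exact ⟨hAX, hnbc, hcl⟩
    · rintro ⟨hAX, hnbc, hcl⟩
      exact ⟨⟨hAX, hnbc.1, hcl⟩, hnbc⟩
  -- NBC part is constant
  have hval : ∑ A ∈ X.powerset.filter (fun A => M.IsNBC ord A ∧ M.closure A = X),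
      (-1 : ℤ) ^ A.card
      = (-1 : ℤ) ^ (M.rk X) *
        ((X.powerset.filter fun A => M.IsNBC ord A ∧ M.closure A = X).card : ℤ) := by
    rw [Finset.sum_congr rfl (fun A hA => ?_), Finset.sum_const, nsmul_eq_mul, mul_comm]
    rw [Finset.mem_filter] at hA
    obtain ⟨hAX, hnbc, hcl⟩ := hA
    have h1 : M.rk A = A.card := nbc_indep M ord hord A hnbc
    have h2 : M.rk (M.closure A) = M.rk A := M.rk_closure A
    rw [hcl] at h2
    rw [← h1, ← h2]
  -- non-NBC part vanishes by the involution
  have hzero : ∑ A ∈ (X.powerset.filter fun A => Disjoint A (M.closure ∅) ∧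
      M.closure A = X).filter (fun A => ¬ M.IsNBC ord A), (-1 : ℤ) ^ A.card = 0 := by
    have hne : ∀ A ∈ (X.powerset.filter fun A => Disjoint A (M.closure ∅) ∧
        M.closure A = X).filter (fun A => ¬ M.IsNBC ord A), (vset M ord A).Nonempty := by
      intro A hA
      rw [Finset.mem_filter, Finset.mem_filter] at hA
      obtain ⟨⟨hAX, hd, hcl⟩, hnnbc⟩ := hA
      unfold IsNBC at hnnbc
      push_neg at hnnbc
      obtain ⟨e, heL, hecl⟩ := hnnbc hd
      exact ⟨e, heL, hecl⟩
    have hgmem : ∀ A (hA : A ∈ (X.powerset.filter fun A => Disjoint A (M.closure ∅) ∧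
        M.closure A = X).filter (fun A => ¬ M.IsNBC ord A)),
        toggle A (emin M ord A (hne A hA)) ∈ (X.powerset.filter fun A =>
          Disjoint A (M.closure ∅) ∧ M.closure A = X).filter
            (fun A => ¬ M.IsNBC ord A) := by
      intro A hA
      have hAmem := hA
      rw [Finset.mem_filter, Finset.mem_filter, Finset.mem_powerset] at hAmem
      obtain ⟨⟨hAX, hd, hcl⟩, hnnbc⟩ := hAmem
      obtain ⟨hmL, hmcl⟩ := emin_spec M ord A (hne A hA)
      set m := emin M ord A (hne A hA) with hmdef
      rw [Finset.mem_filter, Finset.mem_filter, Finset.mem_powerset]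
      have hmX : m ∈ X := by
        rw [← hcl]
        exact M.closure_mono (Finset.filter_subset _ A) hmcl
      have hclt : M.closure (toggle A m) = X := by
        rw [closure_toggle M ord hmcl, hcl]
      refine ⟨⟨toggle_subset hAX hmX, ?_, hclt⟩, ?_⟩
      · rw [Finset.disjoint_left]
        intro x hx hxL
        rcases mem_toggle.1 hx with ⟨h1, -⟩ | ⟨rfl, -⟩
        · exact Finset.disjoint_left.1 hd h1 hxL
        · exact hmL hxL
      · intro hnbc
        refine hnbc.2 m hmL ?_
        rw [closure_toggle_filter M ord hmcl (lt_irrefl _)]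
        exact hmcl
    refine Finset.sum_involution
      (fun A hA => toggle A (emin M ord A (hne A hA)))
      (fun A hA => pow_card_toggle A _)
      (fun A hA _ => toggle_ne A _)
      hgmem
      (fun A hA => ?_)
    beta_reduce
    rw [emin_toggle M ord hord A (hne A hA), toggle_toggle]
  rw [hnbc_set] at hsplit
  rw [← hsplit, hval, hzero, add_zero]

lemma whitney_eq (M : FinMatroid E) (ord : E → ℕ) (hord : Function.Injective ord) (k : ℕ) :
    whitney M k = (univ.powerset.filter fun A => M.IsNBC ord A ∧ A.card = k).card := by
  unfold whitney
  have hmaps : ∀ A ∈ univ.powerset.filter (fun A => M.IsNBC ord A ∧ A.card = k),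
      M.closure A ∈ univ.powerset.filter (fun X => M.IsFlat X ∧ M.rk X = k) := by
    intro A hA
    rw [Finset.mem_filter] at hA ⊢
    obtain ⟨-, hnbc, hcard⟩ := hA
    refine ⟨Finset.mem_powerset.2 (Finset.subset_univ _), M.isFlat_closure A, ?_⟩
    rw [M.rk_closure A, nbc_indep M ord hord A hnbc, hcard]
  rw [Finset.card_eq_sum_card_fiberwise hmaps]
  refine Finset.sum_congr rfl fun X hX => ?_
  rw [Finset.mem_filter] at hX
  obtain ⟨-, hXf, hXrk⟩ := hX
  rw [mu_eq_nbc M ord hord hXf, Int.natAbs_mul, Int.natAbs_pow]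
  simp only [Int.natAbs_neg, Int.natAbs_one, one_pow, one_mul, Int.natAbs_natCast]
  congr 1
  ext A
  simp only [Finset.mem_filter, Finset.mem_powerset]
  constructor
  · rintro ⟨hAX, hnbc, hcl⟩
    refine ⟨⟨Finset.subset_univ A, hnbc, ?_⟩, hcl⟩
    have hia : M.rk A = A.card := nbc_indep M ord hord A hnbc
    rw [← hia, ← M.rk_closure A, hcl, hXrk]
  · rintro ⟨⟨-, hnbc, hcard⟩, hcl⟩
    exact ⟨hcl ▸ M.subset_closure A, hnbc, hcl⟩

end FinMatroid

/-- a surjective weak map between matroids of the same rank `r` weakly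
decreases all Whitney numbers of the first kind: `w_k(M) ≥ w_k(N)` for `0 ≤ k ≤ r`. -/
theorem stmt_8 {α β : Type} [DecidableEq α] [Fintype α] [DecidableEq β] [Fintype β]
    (M : FinMatroid α) (N : FinMatroid β) (τ : α → Option β)
    (hw : FinMatroid.IsWeakMap M N τ) (hs : FinMatroid.IsSurjMap τ)
    (r : ℕ) (hrM : M.rank = r) (hrN : N.rank = r) :
    ∀ k ≤ r, N.whitney k ≤ M.whitney k := by
  open FinMatroid in
  classical
  intro k _
  -- a section of τ
  choose s hsval using hs
  have hsinj : Function.Injective s := by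
    intro b b' h
    have h1 : some b = some b' := by rw [← hsval b, h, hsval b']
    exact Option.some.inj h1
  have himg : ∀ C : Finset β, optImage τ (C.image s) = C := by
    intro C
    ext x
    simp only [optImage, Finset.mem_biUnion, Finset.mem_image]
    constructor
    · rintro ⟨a, ⟨c, hc, rfl⟩, hx⟩
      rw [hsval c, Option.toFinset_some, Finset.mem_singleton] at hx
      exact hx ▸ hc
    · intro hx
      exact ⟨s x, ⟨x, hx, rfl⟩, by rw [hsval x]; simp⟩
  -- the orders
  set ordβ : β → ℕ := fun b => ((Fintype.equivFin β) b : ℕ) with hordβdef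
  have hordβ : Function.Injective ordβ :=
    fun b b' h => (Fintype.equivFin β).injective (Fin.val_injective h)
  set LN := N.closure ∅ with hLN
  set ordα : α → ℕ := fun a =>
    if h : ∃ b, b ∉ LN ∧ s b = a then ordβ h.choose
    else Fintype.card β + ((Fintype.equivFin α) a : ℕ) with hordαdef
  have hordα_s : ∀ b, b ∉ LN → ordα (s b) = ordβ b := by
    intro b hb
    have h : ∃ b', b' ∉ LN ∧ s b' = s b := ⟨b, hb, rfl⟩
    rw [hordαdef]
    simp only []
    rw [dif_pos h]
    exact congrArg ordβ (hsinj h.choose_spec.2)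
  have hordα_big : ∀ a, (¬ ∃ b, b ∉ LN ∧ s b = a) → ∀ b, ordβ b < ordα a := by
    intro a ha b
    rw [hordαdef]
    simp only []
    rw [dif_neg ha]
    simp only [hordβdef]
    have := ((Fintype.equivFin β) b).isLt
    omega
  have hordα : Function.Injective ordα := by
    intro a a' h
    by_cases h1 : ∃ b, b ∉ LN ∧ s b = a <;> by_cases h2 : ∃ b, b ∉ LN ∧ s b = a'
    · obtain ⟨b1, hb1, rfl⟩ := h1
      obtain ⟨b2, hb2, rfl⟩ := h2
      rw [hordα_s b1 hb1, hordα_s b2 hb2] at h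
      rw [hordβ h]
    · obtain ⟨b1, hb1, rfl⟩ := h1
      rw [hordα_s b1 hb1] at h
      have hlt := hordα_big a' h2 b1
      exact absurd h (ne_of_lt hlt)
    · obtain ⟨b2, hb2, rfl⟩ := h2
      rw [hordα_s b2 hb2] at h
      have hlt := hordα_big a h1 b2
      exact absurd h.symm (ne_of_lt hlt)
    · rw [hordαdef] at h
      simp only [dif_neg h1, dif_neg h2] at h
      exact (Fintype.equivFin α).injective (Fin.val_injective (by omega))
  rw [whitney_eq M ordα hordα k, whitney_eq N ordβ hordβ k]
  refine Finset.card_le_card_of_injOn (fun B => B.image s) ?_ ?_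
  swap
  · intro B1 _ B2 _ h
    exact Finset.image_injective hsinj h
  intro B hB
  rw [Finset.mem_coe, Finset.mem_filter] at hB ⊢
  obtain ⟨-, hnbc, hcard⟩ := hB
  obtain ⟨hd, hcond⟩ := hnbc
  have hNindep : N.rk B = B.card := nbc_indep N ordβ hordβ B ⟨hd, hcond⟩
  have hMindep : M.rk (B.image s) = (B.image s).card := by
    have h1 := hw (B.image s)
    rw [himg B, hNindep] at h1
    have h2 := M.rk_le_card (B.image s)
    have h3 : (B.image s).card = B.card := Finset.card_image_of_injective B hsinj
    omega
  refine ⟨Finset.mem_powerset.2 (Finset.subset_univ _), ⟨?_, ?_⟩, by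
    rw [Finset.card_image_of_injective B hsinj]; exact hcard⟩
  · -- disjoint from M-loops
    rw [Finset.disjoint_left]
    rintro x hx hxL
    obtain ⟨b, hb, rfl⟩ := Finset.mem_image.1 hx
    have h1 : M.rk {s b} = 0 := by
      have := M.mem_closure.1 hxL
      rwa [LawfulSingleton.insert_empty_eq, M.rk_empty] at this
    have h2 := hw {s b}
    have h3 : optImage τ {s b} = {b} := by
      have := himg {b}
      rwa [Finset.image_singleton] at this
    rw [h3, h1] at h2
    have h4 : b ∈ LN := by
      rw [hLN, N.mem_closure, LawfulSingleton.insert_empty_eq, N.rk_empty]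
      omega
    exact Finset.disjoint_left.1 hd hb h4
  · -- the broken-circuit condition
    intro e heL hecl
    by_cases hcase : ∃ b, b ∉ LN ∧ s b = e
    · obtain ⟨b, hbLN, rfl⟩ := hcase
      have hfeq : (B.image s).filter (fun x => ordα (s b) < ordα x)
          = (B.filter fun x => ordβ b < ordβ x).image s := by
        ext x
        simp only [Finset.mem_filter, Finset.mem_image]
        constructor
        · rintro ⟨⟨c, hc, rfl⟩, hlt⟩
          have hcLN : c ∉ LN := fun hcc => Finset.disjoint_left.1 hd hc hcc
          rw [hordα_s b hbLN, hordα_s c hcLN] at hlt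
          exact ⟨c, ⟨hc, hlt⟩, rfl⟩
        · rintro ⟨c, ⟨hc, hlt⟩, rfl⟩
          have hcLN : c ∉ LN := fun hcc => Finset.disjoint_left.1 hd hc hcc
          rw [hordα_s b hbLN, hordα_s c hcLN]
          exact ⟨⟨c, hc, rfl⟩, hlt⟩
      rw [hfeq] at hecl
      set B' := B.filter fun x => ordβ b < ordβ x with hB'
      have h1 : M.rk (insert (s b) (B'.image s)) = M.rk (B'.image s) :=
        M.mem_closure.1 hecl
      have h2 : insert (s b) (B'.image s) = (insert b B').image s :=
        (Finset.image_insert s b B').symm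
      have h3 : N.rk (insert b B') ≤ M.rk ((insert b B').image s) := by
        have := hw ((insert b B').image s)
        rwa [himg] at this
      have h4 : M.rk (B'.image s) = (B'.image s).card :=
        M.indep_subset hMindep (Finset.image_subset_image (Finset.filter_subset _ B))
      have h5 : N.rk B' = B'.card := N.indep_subset hNindep (Finset.filter_subset _ B)
      have h6 : N.rk B' ≤ N.rk (insert b B') := N.rk_mono (Finset.subset_insert b B')
      have h7 : (B'.image s).card = B'.card := Finset.card_image_of_injective B' hsinj
      have h8 : N.rk (insert b B') = N.rk B' := by
        rw [← h2] at h3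
        omega
      exact hcond b hbLN (N.mem_closure.2 h8)
    · have hfeq : (B.image s).filter (fun x => ordα e < ordα x) = ∅ := by
        rw [Finset.filter_eq_empty_iff]
        rintro x hx
        obtain ⟨c, hc, rfl⟩ := Finset.mem_image.1 hx
        have hcLN : c ∉ LN := fun hcc => Finset.disjoint_left.1 hd hc hcc
        rw [hordα_s c hcLN]
        exact fun hlt => absurd (hordα_big e hcase c) (by omega)
      rw [hfeq] at hecl
      exact heL hecl
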